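/- arXiv:1910.12831 — 3 statements merged into one kernel-verified Lean document; each statement's English description precedes it below -/
import Mathlib

section
/- Let $\mathbb{Z}$ be a finite set and $P,Q$ probability measures on $\mathbb{Z}$ with full support and $D(P\|Q)>0$. For each $n$, let $\beta_n(\epsilon) = \min\{Q^n(\mathcal{A}) : \mathcal{A}\subseteq\mathbb{Z}^n,\ P^n(\mathcal{A}^c)\le\epsilon\}$. Then for every fixed $\epsilon\in(0,1)$, $\liminf_{n\to\infty} -\frac{1}{n}\log\beta_n(\epsilon) \ge D(P\|Q)$. -/
/-!
Accept `P` on the likelihood-ratio region `Aₙ = {z : ∑ᵢ log (P zᵢ / Q zᵢ) ≥ n (D - δ)}`.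
On `Aₙ` every point has `Qⁿ z ≤ e^{-n(D-δ)} Pⁿ z`, so `Qⁿ(Aₙ) ≤ e^{-n(D-δ)}`. The log-likelihood
ratio is a sum of `n` i.i.d. terms with mean `D` under `Pⁿ`, so Chebyshev's inequality gives
`Pⁿ(Aₙᶜ) ≤ Var / (n δ²) ≤ ε` for large `n`. Hence `βₙ(ε) ≤ e^{-n(D-δ)}` eventually, for every `δ > 0`.
-/

open Finset Real
open scoped Classical

section ProductWeights

variable {Z ι : Type*} [Fintype Z] [Fintype ι] [DecidableEq ι] (P : Z → ℝ)

theorem sum_prod_mul_prod_eq_prod_sum (f : ι → Z → ℝ) :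
    ∑ z : ι → Z, (∏ k, P (z k)) * ∏ k, f k (z k) = ∏ k, ∑ x, P x * f k x := by
  simp_rw [← prod_mul_distrib]
  exact (Fintype.prod_sum fun k x => P x * f k x).symm

variable {P}

theorem sum_prod_eq_one (hP1 : ∑ x, P x = 1) : ∑ z : ι → Z, ∏ k, P (z k) = 1 := by
  simpa [hP1] using sum_prod_mul_prod_eq_prod_sum P fun (_ : ι) (_ : Z) => (1 : ℝ)

theorem sum_mul_ite_eq (hP1 : ∑ x, P x = 1) (p : Prop) [Decidable p] (g : Z → ℝ) :
    ∑ x, P x * (if p then g x else 1) = if p then ∑ x, P x * g x else 1 := by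
  split_ifs <;> simp [hP1]

theorem sum_prod_mul_apply (hP1 : ∑ x, P x = 1) (i : ι) (g : Z → ℝ) :
    ∑ z : ι → Z, (∏ k, P (z k)) * g (z i) = ∑ x, P x * g x := by
  have h := sum_prod_mul_prod_eq_prod_sum P fun k x => if k = i then g x else 1
  simpa only [prod_ite_eq', mem_univ, if_true, sum_mul_ite_eq hP1] using h

theorem sum_prod_mul_apply_mul_apply (hP1 : ∑ x, P x = 1) {i j : ι} (hij : i ≠ j)
    (g h : Z → ℝ) :
    ∑ z : ι → Z, (∏ k, P (z k)) * (g (z i) * h (z j)) =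
      (∑ x, P x * g x) * ∑ x, P x * h x := by
  have hfactor : ∀ k, ∑ x, P x * ((if k = i then g x else 1) * (if k = j then h x else 1)) =
      (if k = i then ∑ x, P x * g x else 1) * (if k = j then ∑ x, P x * h x else 1) := by
    intro k
    rcases eq_or_ne k i with rfl | hki
    · simp [hij]
    · simp [hki, hP1]
  have h := sum_prod_mul_prod_eq_prod_sum P fun k x =>
    (if k = i then g x else 1) * (if k = j then h x else 1)
  simpa only [prod_mul_distrib, prod_ite_eq', mem_univ, if_true, hfactor] using h

theorem sum_prod_mul_sum_sq (hP1 : ∑ x, P x = 1) {Y : Z → ℝ} (hY : ∑ x, P x * Y x = 0) :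
    ∑ z : ι → Z, (∏ k, P (z k)) * (∑ i, Y (z i)) ^ 2 =
      Fintype.card ι * ∑ x, P x * Y x ^ 2 := by
  have hpair : ∀ i j : ι, ∑ z : ι → Z, (∏ k, P (z k)) * (Y (z i) * Y (z j)) =
      if i = j then ∑ x, P x * Y x ^ 2 else 0 := by
    intro i j
    rcases eq_or_ne i j with rfl | hij
    · rw [if_pos rfl]
      simpa only [sq] using sum_prod_mul_apply hP1 i fun x => Y x * Y x
    · simp [sum_prod_mul_apply_mul_apply hP1 hij, hY, hij]
  calc ∑ z : ι → Z, (∏ k, P (z k)) * (∑ i, Y (z i)) ^ 2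
      = ∑ i, ∑ j, ∑ z : ι → Z, (∏ k, P (z k)) * (Y (z i) * Y (z j)) := by
        simp_rw [sq, sum_mul_sum, mul_sum]
        rw [sum_comm]
        exact sum_congr rfl fun _ _ => sum_comm
    _ = Fintype.card ι * ∑ x, P x * Y x ^ 2 := by simp [hpair]

end ProductWeights

theorem sum_le_sum_mul_sq_div_sq {α : Type*} [Fintype α] {w g : α → ℝ} (hw : ∀ a, 0 ≤ w a)
    {t : ℝ} (ht : 0 < t) {B : Finset α} (hB : ∀ a ∈ B, t ≤ |g a|) :
    ∑ a ∈ B, w a ≤ (∑ a, w a * g a ^ 2) / t ^ 2 := by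
  rw [le_div_iff₀ (by positivity), sum_mul]
  calc ∑ a ∈ B, w a * t ^ 2
      ≤ ∑ a ∈ B, w a * g a ^ 2 := by
        refine sum_le_sum fun a ha => mul_le_mul_of_nonneg_left ?_ (hw a)
        simpa only [sq_abs] using pow_le_pow_left₀ ht.le (hB a ha) 2
    _ ≤ ∑ a, w a * g a ^ 2 :=
        sum_le_sum_of_subset_of_nonneg (subset_univ B) fun a _ _ =>
          mul_nonneg (hw a) (sq_nonneg _)

theorem prod_eq_prod_mul_exp_neg_sum_log {Z ι : Type*} [Fintype ι] {P Q : Z → ℝ}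
    (hP : ∀ x, 0 < P x) (hQ : ∀ x, 0 < Q x) (z : ι → Z) :
    ∏ i, Q (z i) = (∏ i, P (z i)) * exp (-∑ i, log (P (z i) / Q (z i))) := by
  simp_rw [← sum_neg_distrib, ← log_inv, inv_div, exp_sum, exp_log (div_pos (hQ _) (hP _)),
    ← prod_mul_distrib, mul_div_cancel₀ _ (hP _).ne']

section LargeDeviations

variable {Z : Type*} [Fintype Z] {P : Z → ℝ}

theorem sum_prod_filter_sum_lt_le (hP : ∀ x, 0 ≤ P x) (hP1 : ∑ x, P x = 1) (X : Z → ℝ)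
    {n : ℕ} (hn : 0 < n) {δ : ℝ} (hδ : 0 < δ) :
    ∑ z ∈ univ.filter (fun z : Fin n → Z => ∑ i, X (z i) < n * (∑ x, P x * X x - δ)),
        ∏ i, P (z i) ≤ (∑ x, P x * (X x - ∑ y, P y * X y) ^ 2) / (n * δ ^ 2) := by
  set E := ∑ x, P x * X x
  have hcentered : ∑ x, P x * (X x - E) = 0 := by
    simp only [mul_sub, sum_sub_distrib, ← sum_mul, hP1, one_mul, E, sub_self]
  have hdev : ∀ z ∈ univ.filter (fun z : Fin n → Z => ∑ i, X (z i) < n * (E - δ)),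
      n * δ ≤ |∑ i, (X (z i) - E)| := by
    intro z hz
    rw [mem_filter] at hz
    rw [sum_sub_distrib, sum_const, card_univ, Fintype.card_fin, nsmul_eq_mul]
    exact le_trans (by linarith [hz.2]) (neg_le_abs _)
  calc _ ≤ (∑ z : Fin n → Z, (∏ i, P (z i)) * (∑ i, (X (z i) - E)) ^ 2) / (n * δ) ^ 2 :=
        sum_le_sum_mul_sq_div_sq (fun z => prod_nonneg fun i _ => hP _) (by positivity) hdev
    _ = (∑ x, P x * (X x - E) ^ 2) / (n * δ ^ 2) := by
        rw [sum_prod_mul_sum_sq hP1 (Y := fun x => X x - E) hcentered, Fintype.card_fin]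
        field_simp

variable (P) in
noncomputable def likelihoodRatioRegion (Q : Z → ℝ) (n : ℕ) (c : ℝ) : Finset (Fin n → Z) :=
  univ.filter fun z => n * c ≤ ∑ i, log (P (z i) / Q (z i))

variable {Q : Z → ℝ}

theorem sum_prod_likelihoodRatioRegion_le (hP : ∀ x, 0 < P x) (hQ : ∀ x, 0 < Q x)
    (hP1 : ∑ x, P x = 1) (n : ℕ) (c : ℝ) :
    ∑ z ∈ likelihoodRatioRegion P Q n c, ∏ i, Q (z i) ≤ exp (-(n * c)) := by
  have hpoint : ∀ z ∈ likelihoodRatioRegion P Q n c,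
      ∏ i, Q (z i) ≤ (∏ i, P (z i)) * exp (-(n * c)) := by
    intro z hz
    rw [prod_eq_prod_mul_exp_neg_sum_log hP hQ]
    exact mul_le_mul_of_nonneg_left (exp_le_exp.2 (neg_le_neg (mem_filter.mp hz).2))
      (prod_nonneg fun i _ => (hP _).le)
  calc _ ≤ ∑ z ∈ likelihoodRatioRegion P Q n c, (∏ i, P (z i)) * exp (-(n * c)) :=
        sum_le_sum hpoint
    _ ≤ (∑ z : Fin n → Z, ∏ i, P (z i)) * exp (-(n * c)) := by
        rw [← sum_mul]
        gcongr
        · exact fun z _ _ => prod_nonneg fun i _ => (hP _).le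
        · exact subset_univ _
    _ = exp (-(n * c)) := by rw [sum_prod_eq_one hP1, one_mul]

theorem sum_prod_compl_likelihoodRatioRegion_le (hP : ∀ x, 0 < P x) (hP1 : ∑ x, P x = 1)
    {n : ℕ} (hn : 0 < n) {δ : ℝ} (hδ : 0 < δ) :
    let D := ∑ x, P x * log (P x / Q x)
    ∑ z ∈ (likelihoodRatioRegion P Q n (D - δ))ᶜ, ∏ i, P (z i) ≤
      (∑ x, P x * (log (P x / Q x) - D) ^ 2) / (n * δ ^ 2) := by
  simpa only [likelihoodRatioRegion, compl_filter, not_le] using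
    sum_prod_filter_sum_lt_le (fun x => (hP x).le) hP1 (fun x => log (P x / Q x)) hn hδ

end LargeDeviations

section TypeIIErrors

variable {Z : Type*} [Fintype Z]

def typeIIErrors (P Q : Z → ℝ) (n : ℕ) (ε : ℝ) : Set ℝ :=
  {q : ℝ | ∃ A : Finset (Fin n → Z), (∑ z ∈ Aᶜ, ∏ i, P (z i)) ≤ ε ∧ q = ∑ z ∈ A, ∏ i, Q (z i)}

variable {P Q : Z → ℝ} {n : ℕ} {ε : ℝ}

theorem sInf_typeIIErrors_le (hQ : ∀ x, 0 ≤ Q x) {A : Finset (Fin n → Z)}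
    (hA : ∑ z ∈ Aᶜ, ∏ i, P (z i) ≤ ε) :
    sInf (typeIIErrors P Q n ε) ≤ ∑ z ∈ A, ∏ i, Q (z i) := by
  refine csInf_le ⟨0, ?_⟩ ⟨A, hA, rfl⟩
  rintro _ ⟨B, -, rfl⟩
  exact sum_nonneg fun z _ => prod_nonneg fun i _ => hQ _

theorem pow_le_of_mem_typeIIErrors (hP1 : ∑ x, P x = 1) (hε : ε < 1) {m : ℝ} (hm : 0 ≤ m)
    (hmQ : ∀ x, m ≤ Q x) {q : ℝ} (hq : q ∈ typeIIErrors P Q n ε) : m ^ n ≤ q := by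
  obtain ⟨A, hA, rfl⟩ := hq
  obtain ⟨z, hz⟩ : A.Nonempty := by
    rw [nonempty_iff_ne_empty]
    rintro rfl
    rw [compl_empty, sum_prod_eq_one hP1] at hA
    linarith
  calc m ^ n = ∏ _i : Fin n, m := by simp
    _ ≤ ∏ i, Q (z i) := prod_le_prod (fun _ _ => hm) fun i _ => hmQ _
    _ ≤ ∑ z ∈ A, ∏ i, Q (z i) :=
        single_le_sum (f := fun z : Fin n → Z => ∏ i, Q (z i))
          (fun z _ => prod_nonneg fun i _ => hm.trans (hmQ _)) hz

theorem pow_le_sInf_typeIIErrors (hP1 : ∑ x, P x = 1) (hε : ε ∈ Set.Ioo 0 1) {m : ℝ}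
    (hm : 0 ≤ m) (hmQ : ∀ x, m ≤ Q x) : m ^ n ≤ sInf (typeIIErrors P Q n ε) :=
  le_csInf ⟨_, univ, by simpa using hε.1.le, rfl⟩ fun _ hq =>
    pow_le_of_mem_typeIIErrors hP1 hε.2 hm hmQ hq

end TypeIIErrors

theorem le_neg_one_div_mul_log_of_le_exp {n b c : ℝ} (hn : 0 < n) (hb : 0 < b)
    (h : b ≤ exp (-(n * c))) : c ≤ -(1 / n) * log b := by
  have := (log_le_log hb h).trans_eq (log_exp _)
  rw [neg_mul, one_div_mul_eq_div, le_neg, div_le_iff₀ hn]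
  linarith

theorem neg_one_div_mul_log_le_of_pow_le {n : ℕ} (hn : 0 < n) {m b : ℝ} (hm : 0 < m)
    (h : m ^ n ≤ b) : -(1 / (n : ℝ)) * log b ≤ -log m := by
  have := log_le_log (pow_pos hm n) h
  rw [log_pow] at this
  rw [neg_mul, one_div_mul_eq_div, neg_le_neg_iff, le_div_iff₀ (by positivity)]
  linarith

theorem stmt_7_general {Z : Type*} [Fintype Z]
    (P Q : Z → ℝ) (hPpos : ∀ z, 0 < P z) (hP1 : ∑ z, P z = 1)
    (hQpos : ∀ z, 0 < Q z)
    (β : ℕ → ℝ → ℝ)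
    (hβ : ∀ n ε, β n ε = sInf {q : ℝ | ∃ A : Finset (Fin n → Z),
        (∑ z ∈ Aᶜ, ∏ i, P (z i)) ≤ ε ∧ q = ∑ z ∈ A, ∏ i, Q (z i)})
    (ε : ℝ) (hε : ε ∈ Set.Ioo (0 : ℝ) 1) :
    (∑ z, P z * Real.log (P z / Q z)) ≤
      Filter.atTop.liminf (fun n : ℕ => -(1 / (n : ℝ)) * Real.log (β n ε)) := by
  have : Nonempty Z := (nonempty_of_sum_ne_zero (hP1 ▸ one_ne_zero)).to_type
  obtain ⟨x₀, hx₀⟩ := Finite.exists_min Q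
  set D := ∑ z, P z * log (P z / Q z)
  set V := ∑ z, P z * (log (P z / Q z) - D) ^ 2
  have hβ_lower (n : ℕ) : Q x₀ ^ n ≤ β n ε :=
    hβ n ε ▸ pow_le_sInf_typeIIErrors hP1 hε (hQpos x₀).le hx₀
  have hβ_upper (δ : ℝ) (hδ : 0 < δ) : ∀ᶠ n : ℕ in Filter.atTop,
      0 < n ∧ β n ε ≤ exp (-(n * (D - δ))) := by
    filter_upwards [tendsto_natCast_atTop_atTop.eventually_ge_atTop (V / (ε * δ ^ 2)),
      Filter.eventually_gt_atTop 0] with n hn hn0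
    have hmiss : ∑ z ∈ (likelihoodRatioRegion P Q n (D - δ))ᶜ, ∏ i, P (z i) ≤ ε := by
      refine (sum_prod_compl_likelihoodRatioRegion_le hPpos hP1 hn0 hδ).trans ?_
      rw [div_le_iff₀ (by positivity)]
      rw [div_le_iff₀ (by have := hε.1; positivity)] at hn
      linarith
    refine ⟨hn0, hβ n ε ▸ (sInf_typeIIErrors_le (fun x => (hQpos x).le) hmiss).trans ?_⟩
    exact sum_prod_likelihoodRatioRegion_le hPpos hQpos hP1 n (D - δ)
  -- `liminf` on `ℝ` is junk for a sequence unbounded above; `βₙ(ε) ≥ (min Q)ⁿ` bounds it.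
  have hbounded : Filter.IsBoundedUnder (· ≤ ·) Filter.atTop
      (fun n : ℕ => -(1 / (n : ℝ)) * log (β n ε)) :=
    Filter.isBoundedUnder_of_eventually_le <| (Filter.eventually_gt_atTop 0).mono fun n hn =>
      neg_one_div_mul_log_le_of_pow_le hn (hQpos x₀) (hβ_lower n)
  refine le_of_forall_sub_le fun δ hδ => Filter.le_liminf_of_le hbounded.isCoboundedUnder_ge ?_
  filter_upwards [hβ_upper δ hδ] with n ⟨hn0, hn⟩
  exact le_neg_one_div_mul_log_of_le_exp (by exact_mod_cast hn0)
    ((pow_pos (hQpos x₀) n).trans_le (hβ_lower n)) hn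

theorem stmt_7 {Z : Type*} [Fintype Z] [Nonempty Z]
    (P Q : Z → ℝ) (hPpos : ∀ z, 0 < P z) (hP1 : ∑ z, P z = 1)
    (hQpos : ∀ z, 0 < Q z) (hQ1 : ∑ z, Q z = 1)
    (hD : 0 < ∑ z, P z * Real.log (P z / Q z))
    (β : ℕ → ℝ → ℝ)
    (hβ : ∀ n ε, β n ε = sInf {q : ℝ | ∃ A : Finset (Fin n → Z),
        (∑ z ∈ Aᶜ, ∏ i, P (z i)) ≤ ε ∧ q = ∑ z ∈ A, ∏ i, Q (z i)})
    (ε : ℝ) (hε : ε ∈ Set.Ioo (0 : ℝ) 1) :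
    (∑ z, P z * Real.log (P z / Q z)) ≤
      Filter.atTop.liminf (fun n : ℕ => -(1 / (n : ℝ)) * Real.log (β n ε)) :=
  stmt_7_general P Q hPpos hP1 hQpos β hβ ε hε
end

section
/- Let $\mathbb{Z}$ be a finite set and $P,Q$ probability measures on $\mathbb{Z}$ with full support. For each $n$, let $\beta_n(\epsilon) = \min\{Q^n(\mathcal{A}) : \mathcal{A}\subseteq\mathbb{Z}^n,\ P^n(\mathcal{A}^c)\le\epsilon\}$. Then for every fixed $\epsilon\in(0,1)$, $\limsup_{n\to\infty} -\frac{1}{n}\log\beta_n(\epsilon) \le D(P\|Q)$. -/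
open Finset
open scoped Classical

open Filter Real Topology

/-! Change of measure: on the set where the empirical log-likelihood ratio
`(1/n) ∑ᵢ log (P zᵢ / Q zᵢ)` is at most `t`, the product measure `Pⁿ` is at most `e^{nt} Qⁿ`.
Hence every test `A` with `Pⁿ(Aᶜ) ≤ ε` has `Qⁿ(A) ≥ e^{-nt} (Pⁿ(ratio ≤ t) - ε)`. For
`t > D(P‖Q)` a Chernoff bound shows `Pⁿ(ratio ≤ t) → 1`, so `βₙ(ε) ≥ c e^{-nt}` eventually
with `c > 0`, i.e. `-(1/n) log βₙ(ε) ≤ t + o(1)`. -/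

section ProductMass

variable {Z : Type*}

noncomputable def prodMass (p : Z → ℝ) {n : ℕ} (A : Finset (Fin n → Z)) : ℝ :=
  ∑ z ∈ A, ∏ i, p (z i)

lemma prodMass_nonneg {p : Z → ℝ} (hp : ∀ z, 0 ≤ p z) {n : ℕ} (A : Finset (Fin n → Z)) :
    0 ≤ prodMass p A :=
  sum_nonneg fun _ _ => prod_nonneg fun _ _ => hp _

lemma prodMass_mono {p : Z → ℝ} (hp : ∀ z, 0 ≤ p z) {n : ℕ} {A B : Finset (Fin n → Z)}
    (hAB : A ⊆ B) : prodMass p A ≤ prodMass p B :=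
  sum_le_sum_of_subset_of_nonneg hAB fun _ _ _ => prod_nonneg fun _ _ => hp _

lemma prodMass_univ [Fintype Z] (p : Z → ℝ) (n : ℕ) :
    prodMass p (univ : Finset (Fin n → Z)) = (∑ z, p z) ^ n := by
  rw [prodMass, ← Fintype.prod_sum fun (_ : Fin n) (z : Z) => p z]
  simp

lemma prodMass_compl [Fintype Z] {p : Z → ℝ} (hp1 : ∑ z, p z = 1) {n : ℕ} (A : Finset (Fin n → Z)) :
    prodMass p Aᶜ = 1 - prodMass p A := by
  have := sum_add_sum_compl A fun z => ∏ i, p (z i)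
  rw [← prodMass, ← prodMass, ← prodMass, prodMass_univ, hp1, one_pow] at this
  linarith

end ProductMass

lemma HasDerivAt.exists_gt_lt_of_neg {g : ℝ → ℝ} {g' x : ℝ} (hg : HasDerivAt g g' x)
    (hg' : g' < 0) : ∃ y, x < y ∧ g y < g x := by
  obtain ⟨y, hslope, hxy⟩ :=
    ((hg.hasDerivWithinAt.liminf_right_slope_le hg').and_eventually self_mem_nhdsWithin).exists
  refine ⟨y, hxy, ?_⟩
  rw [slope_def_field, div_neg_iff] at hslope
  have : 0 < y - x := sub_pos.2 hxy
  rcases hslope with h | h <;> linarith [h.1, h.2]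

section Chernoff

variable {Z : Type*} [Fintype Z]

lemma exists_pos_sum_mul_exp_lt_one {p : Z → ℝ} (hp1 : ∑ z, p z = 1) (f : Z → ℝ) {t : ℝ}
    (ht : ∑ z, p z * f z < t) : ∃ s, 0 < s ∧ ∑ z, p z * exp (s * (f z - t)) < 1 := by
  have hderiv : HasDerivAt (fun s => ∑ z, p z * exp (s * (f z - t)))
      (∑ z, p z * (f z - t)) 0 := by
    refine HasDerivAt.fun_sum fun z _ => ?_
    simpa using (((hasDerivAt_id (0 : ℝ)).mul_const (f z - t)).exp).const_mul (p z)
  have hneg : ∑ z, p z * (f z - t) < 0 := by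
    simp only [mul_sub, sum_sub_distrib, ← sum_mul, hp1]
    linarith
  obtain ⟨s, hs, hlt⟩ := hderiv.exists_gt_lt_of_neg hneg
  exact ⟨s, hs, by simpa [hp1] using hlt⟩

lemma prodMass_filter_lt_le_pow {p : Z → ℝ} (hp : ∀ z, 0 ≤ p z) (f : Z → ℝ) (t : ℝ) {s : ℝ}
    (hs : 0 ≤ s) (n : ℕ) :
    prodMass p {z : Fin n → Z | n * t < ∑ i, f (z i)} ≤
      (∑ z, p z * exp (s * (f z - t))) ^ n := by
  set p' : Z → ℝ := fun z => p z * exp (s * (f z - t))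
  have hp' : ∀ z, 0 ≤ p' z := fun z => mul_nonneg (hp z) (exp_pos _).le
  calc prodMass p {z : Fin n → Z | n * t < ∑ i, f (z i)}
      ≤ prodMass p' {z : Fin n → Z | n * t < ∑ i, f (z i)} := by
        refine sum_le_sum fun z hz => ?_
        have htilt : ∏ i, p' (z i) = (∏ i, p (z i)) * exp (s * (∑ i, f (z i) - n * t)) := by
          rw [prod_mul_distrib, ← exp_sum]
          simp only [mul_sub, mul_sum, sum_sub_distrib, sum_const, card_univ, Fintype.card_fin,
            nsmul_eq_mul]
          ring_nf
        have hz : n * t < ∑ i, f (z i) := (mem_filter.1 hz).2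
        rw [htilt]
        exact le_mul_of_one_le_right (prod_nonneg fun _ _ => hp _)
          (one_le_exp (mul_nonneg hs (by linarith)))
    _ ≤ prodMass p' (univ : Finset (Fin n → Z)) := prodMass_mono hp' (subset_univ _)
    _ = (∑ z, p' z) ^ n := prodMass_univ p' n

theorem tendsto_prodMass_filter_le {p : Z → ℝ} (hp : ∀ z, 0 ≤ p z) (hp1 : ∑ z, p z = 1)
    (f : Z → ℝ) {t : ℝ} (ht : ∑ z, p z * f z < t) :
    Tendsto (fun n : ℕ => prodMass p {z : Fin n → Z | ∑ i, f (z i) ≤ n * t}) atTop (𝓝 1) := by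
  obtain ⟨s, hs, hr⟩ := exists_pos_sum_mul_exp_lt_one hp1 f ht
  have hr0 : 0 ≤ ∑ z, p z * exp (s * (f z - t)) :=
    sum_nonneg fun z _ => mul_nonneg (hp z) (exp_pos _).le
  have htail : Tendsto (fun n : ℕ => prodMass p {z : Fin n → Z | n * t < ∑ i, f (z i)})
      atTop (𝓝 0) :=
    squeeze_zero (fun _ => prodMass_nonneg hp _) (prodMass_filter_lt_le_pow hp f t hs.le)
      (tendsto_pow_atTop_nhds_zero_of_lt_one hr0 hr)
  have hcompl : ∀ n : ℕ, prodMass p {z : Fin n → Z | ∑ i, f (z i) ≤ n * t} =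
      1 - prodMass p {z : Fin n → Z | n * t < ∑ i, f (z i)} := fun n => by
    rw [← prodMass_compl hp1, compl_filter]
    simp only [not_lt]
  simpa only [hcompl, sub_zero] using htail.const_sub 1

end Chernoff

section HypothesisTesting

variable {Z : Type*} {p q : Z → ℝ}

lemma prod_le_exp_mul_prod (hp : ∀ z, 0 < p z) (hq : ∀ z, 0 < q z) {n : ℕ} {t : ℝ}
    {z : Fin n → Z} (hz : ∑ i, log (p (z i) / q (z i)) ≤ n * t) :
    ∏ i, p (z i) ≤ exp (n * t) * ∏ i, q (z i) := by
  have hratio : ∏ i, p (z i) = exp (∑ i, log (p (z i) / q (z i))) * ∏ i, q (z i) := by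
    rw [exp_sum, ← prod_mul_distrib]
    refine prod_congr rfl fun i _ => ?_
    rw [exp_log (div_pos (hp _) (hq _)), div_mul_cancel₀ _ (hq _).ne']
  rw [hratio]
  exact mul_le_mul_of_nonneg_right (exp_le_exp.2 hz) (prod_nonneg fun _ _ => (hq _).le)

theorem prodMass_le_prodMass_compl_add_exp_mul [Fintype Z] (hp : ∀ z, 0 < p z) (hq : ∀ z, 0 < q z)
    {n : ℕ} (t : ℝ) (A : Finset (Fin n → Z)) :
    prodMass p {z : Fin n → Z | ∑ i, log (p (z i) / q (z i)) ≤ n * t} ≤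
      prodMass p Aᶜ + exp (n * t) * prodMass q A := by
  set T : Finset (Fin n → Z) := {z | ∑ i, log (p (z i) / q (z i)) ≤ n * t}
  have hsplit : prodMass p T = prodMass p (T ∩ A) + prodMass p (T \ A) :=
    (sum_inter_add_sum_sdiff T A _).symm
  have hout : prodMass p (T \ A) ≤ prodMass p Aᶜ :=
    prodMass_mono (fun z => (hp z).le) fun z hz => mem_compl.2 (mem_sdiff.1 hz).2
  have hin : prodMass p (T ∩ A) ≤ exp (n * t) * prodMass q A :=
    calc prodMass p (T ∩ A) ≤ exp (n * t) * prodMass q (T ∩ A) := by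
          rw [prodMass, prodMass, mul_sum]
          exact sum_le_sum fun z hz =>
            prod_le_exp_mul_prod hp hq (mem_filter.1 (mem_inter.1 hz).1).2
      _ ≤ exp (n * t) * prodMass q A :=
          mul_le_mul_of_nonneg_left (prodMass_mono (fun z => (hq z).le) inter_subset_right)
            (exp_pos _).le
  linarith

noncomputable def typeIIError [Fintype Z] (p q : Z → ℝ) (n : ℕ) (ε : ℝ) : ℝ :=
  sInf {b : ℝ | ∃ A : Finset (Fin n → Z), prodMass p Aᶜ ≤ ε ∧ b = prodMass q A}

lemma typeIIError_le_one [Fintype Z] (hq : ∀ z, 0 ≤ q z) (hq1 : ∑ z, q z = 1) (n : ℕ) {ε : ℝ}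
    (hε : 0 ≤ ε) : typeIIError p q n ε ≤ 1 := by
  refine csInf_le ⟨0, ?_⟩ ⟨univ, by simpa [prodMass] using hε, ?_⟩
  · rintro _ ⟨A, -, rfl⟩
    exact prodMass_nonneg hq A
  · rw [prodMass_univ, hq1, one_pow]

theorem exp_mul_sub_le_typeIIError [Fintype Z] (hp : ∀ z, 0 < p z) (hq : ∀ z, 0 < q z) (n : ℕ) (t : ℝ)
    {ε : ℝ} (hε : 0 ≤ ε) :
    exp (-(n * t)) * (prodMass p {z : Fin n → Z | ∑ i, log (p (z i) / q (z i)) ≤ n * t} - ε) ≤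
      typeIIError p q n ε := by
  refine le_csInf ⟨_, univ, by simpa [prodMass] using hε, rfl⟩ ?_
  rintro _ ⟨A, hA, rfl⟩
  have := prodMass_le_prodMass_compl_add_exp_mul hp hq t A
  calc exp (-(n * t)) * (prodMass p {z : Fin n → Z | ∑ i, log (p (z i) / q (z i)) ≤ n * t} - ε)
      ≤ exp (-(n * t)) * (exp (n * t) * prodMass q A) :=
        mul_le_mul_of_nonneg_left (by linarith) (exp_pos _).le
    _ = prodMass q A := by rw [← mul_assoc, ← exp_add, neg_add_cancel, exp_zero, one_mul]

end HypothesisTesting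

lemma neg_one_div_mul_log_le {b c t : ℝ} {n : ℕ} (hn : 0 < n) (hc : 0 < c)
    (hb : c * exp (-(n * t)) ≤ b) : -(1 / (n : ℝ)) * log b ≤ t - log c / n := by
  have hn' : (0 : ℝ) < n := Nat.cast_pos.2 hn
  have hlog : log c - n * t ≤ log b := by
    have := log_le_log (by positivity) hb
    rwa [log_mul hc.ne' (exp_pos _).ne', log_exp, ← sub_eq_add_neg] at this
  calc -(1 / (n : ℝ)) * log b ≤ -(1 / (n : ℝ)) * (log c - n * t) :=
        mul_le_mul_of_nonpos_left hlog (by simp)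
    _ = t - log c / n := by field_simp; ring

theorem stmt_8_general {Z : Type*} [Fintype Z]
    (P Q : Z → ℝ) (hPpos : ∀ z, 0 < P z) (hP1 : ∑ z, P z = 1)
    (hQpos : ∀ z, 0 < Q z) (hQ1 : ∑ z, Q z = 1)
    
    (β : ℕ → ℝ → ℝ)
    (hβ : ∀ n ε, β n ε = sInf {q : ℝ | ∃ A : Finset (Fin n → Z),
        (∑ z ∈ Aᶜ, ∏ i, P (z i)) ≤ ε ∧ q = ∑ z ∈ A, ∏ i, Q (z i)})
    (ε : ℝ) (hε : ε ∈ Set.Ioo (0 : ℝ) 1) :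
    Filter.atTop.limsup (fun n : ℕ => -(1 / (n : ℝ)) * Real.log (β n ε)) ≤
      ∑ z, P z * Real.log (P z / Q z) := by
  obtain ⟨hε0, hε1⟩ := hε
  have hβ' : ∀ n, β n ε = typeIIError P Q n ε := fun n => hβ n ε
  refine le_of_forall_gt_imp_ge_of_dense fun s hs => ?_
  set t := (∑ z, P z * log (P z / Q z) + s) / 2 with ht_def
  set c := (1 - ε) / 2 with hc_def
  have hc : 0 < c := by linarith
  have hlarge : ∀ᶠ n : ℕ in atTop,
      ε + c < prodMass P {z : Fin n → Z | ∑ i, log (P (z i) / Q (z i)) ≤ n * t} :=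
    (tendsto_prodMass_filter_le (fun z => (hPpos z).le) hP1 (fun z => log (P z / Q z))
      (by linarith)).eventually (lt_mem_nhds (by linarith))
  have hβ_lower : ∀ᶠ n : ℕ in atTop, c * exp (-(n * t)) ≤ β n ε := by
    filter_upwards [hlarge] with n hn
    rw [hβ', mul_comm]
    exact (mul_le_mul_of_nonneg_left (by linarith) (exp_pos _).le).trans
      (exp_mul_sub_le_typeIIError hPpos hQpos n t hε0.le)
  have hsmall : ∀ᶠ n : ℕ in atTop, -log c / n < s - t :=
    (tendsto_const_div_atTop_nhds_zero_nat _).eventually (gt_mem_nhds (by linarith))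
  have hle : ∀ᶠ n : ℕ in atTop, -(1 / (n : ℝ)) * log (β n ε) ≤ s := by
    filter_upwards [hβ_lower, hsmall, eventually_gt_atTop 0] with n hb hn hpos
    linarith [neg_one_div_mul_log_le hpos hc hb, neg_div (n : ℝ) (log c)]
  have hnonneg : ∀ᶠ n : ℕ in atTop, 0 ≤ -(1 / (n : ℝ)) * log (β n ε) := by
    filter_upwards [hβ_lower] with n hb
    refine mul_nonneg_of_nonpos_of_nonpos (by simp) (log_nonpos ?_ ?_)
    · exact (by positivity : 0 ≤ c * exp (-(n * t))).trans hb
    · exact hβ' n ▸ typeIIError_le_one (fun z => (hQpos z).le) hQ1 n hε0.le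
  exact limsup_le_of_le (isCoboundedUnder_le_of_eventually_le _ hnonneg) hle

theorem stmt_8 {Z : Type*} [Fintype Z] [Nonempty Z]
    (P Q : Z → ℝ) (hPpos : ∀ z, 0 < P z) (hP1 : ∑ z, P z = 1)
    (hQpos : ∀ z, 0 < Q z) (hQ1 : ∑ z, Q z = 1)
    
    (β : ℕ → ℝ → ℝ)
    (hβ : ∀ n ε, β n ε = sInf {q : ℝ | ∃ A : Finset (Fin n → Z),
        (∑ z ∈ Aᶜ, ∏ i, P (z i)) ≤ ε ∧ q = ∑ z ∈ A, ∏ i, Q (z i)})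
    (ε : ℝ) (hε : ε ∈ Set.Ioo (0 : ℝ) 1) :
    Filter.atTop.limsup (fun n : ℕ => -(1 / (n : ℝ)) * Real.log (β n ε)) ≤
      ∑ z, P z * Real.log (P z / Q z) :=
  stmt_8_general P Q hPpos hP1 hQpos hQ1 β hβ ε hε
end

section
/- Let $\mathbb{Z}$ be a finite set, $P,Q$ probability measures on $\mathbb{Z}$ with full support, $C = \max_z |\log(P(\{z\})/Q(\{z\}))|$ with $C>0$, and $n\ge 1$. For any $\epsilon\in(0,1)$ and any $s > C\sqrt{2\ln(1/(1-\epsilon))/n}$, the optimal Type II error $\beta_n(\epsilon)$ satisfies $-\frac{1}{n}\log\beta_n(\epsilon) \le D(P\|Q) + s + \frac{1}{n}\log\frac{1}{1-\epsilon-e^{-ns^2/(2C^2)}}$. -/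
/-!
Under `P`, the log-likelihood ratio `∑ i, log (P/Q)(zᵢ)` of a sample of length `n` is a sum of
independent variables with values in `[-C, C]` and mean `D(P‖Q)`, so by Hoeffding's inequality it
exceeds `n (D + s)` with probability at most `e^{-ns²/(2C²)}`. Off that event `Pⁿ ≤ e^{n(D+s)} Qⁿ`
pointwise, hence every test `A` with `Pⁿ(Aᶜ) ≤ ε` has
`e^{n(D+s)} Qⁿ(A) ≥ Pⁿ(A) - e^{-ns²/(2C²)} ≥ 1 - ε - e^{-ns²/(2C²)}`, which the condition on `s`
makes positive. Taking the infimum over `A` and logarithms gives the bound on `β`.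
-/

open Finset MeasureTheory ProbabilityTheory
open scoped Classical

section WeightMeasure

variable {Z : Type*} [Fintype Z] [MeasurableSpace Z]

noncomputable def weightMeasure (P : Z → ℝ) : Measure Z :=
  ∑ z, ENNReal.ofReal (P z) • Measure.dirac z

lemma isProbabilityMeasure_weightMeasure {P : Z → ℝ} (hP : ∀ z, 0 ≤ P z) (hP1 : ∑ z, P z = 1) :
    IsProbabilityMeasure (weightMeasure P) := by
  constructor
  simp [weightMeasure, ← ENNReal.ofReal_sum_of_nonneg fun z _ => hP z, hP1]

variable [MeasurableSingletonClass Z]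

lemma weightMeasure_singleton (P : Z → ℝ) (z : Z) :
    weightMeasure P {z} = ENNReal.ofReal (P z) := by
  simp [weightMeasure, Set.indicator_apply]

lemma weightMeasure_real_singleton {P : Z → ℝ} (hP : ∀ z, 0 ≤ P z) (z : Z) :
    (weightMeasure P).real {z} = P z := by
  rw [measureReal_def, weightMeasure_singleton, ENNReal.toReal_ofReal (hP z)]

lemma integral_weightMeasure {P : Z → ℝ} (hP : ∀ z, 0 ≤ P z) (hP1 : ∑ z, P z = 1) (L : Z → ℝ) :
    ∫ z, L z ∂weightMeasure P = ∑ z, P z * L z := by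
  have := isProbabilityMeasure_weightMeasure hP hP1
  rw [integral_fintype Integrable.of_finite]
  simp [weightMeasure_real_singleton hP]

lemma pi_weightMeasure_real_finset {ι : Type*} [Fintype ι] {P : Z → ℝ} (hP : ∀ z, 0 ≤ P z)
    (hP1 : ∑ z, P z = 1) (S : Finset (ι → Z)) :
    (Measure.pi fun _ : ι => weightMeasure P).real S = ∑ f ∈ S, ∏ i, P (f i) := by
  have := isProbabilityMeasure_weightMeasure hP hP1
  rw [← sum_measureReal_singleton]
  refine sum_congr rfl fun f _ => ?_
  simp [measureReal_def, Measure.pi_singleton, ENNReal.toReal_prod, weightMeasure_singleton,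
    ENNReal.toReal_ofReal (hP _)]

end WeightMeasure

lemma sum_prod_le_exp_of_le_sum {ι Z : Type*} [Fintype ι] [DecidableEq ι] [Fintype Z]
    {P L : Z → ℝ}
    (hP : ∀ z, 0 ≤ P z) (hP1 : ∑ z, P z = 1) {C : ℝ} (hL : ∀ z, |L z| ≤ C) {s : ℝ} (hs : 0 ≤ s) :
    ∑ f ∈ univ.filter (fun f : ι → Z => Fintype.card ι * (∑ z, P z * L z + s) ≤ ∑ i, L (f i)),
      ∏ i, P (f i) ≤ Real.exp (-(Fintype.card ι) * s ^ 2 / (2 * C ^ 2)) := by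
  let : MeasurableSpace Z := ⊤
  have : MeasurableSingletonClass Z := ⟨fun _ => trivial⟩
  have := isProbabilityMeasure_weightMeasure hP hP1
  set μ := weightMeasure P
  have hLμ : ∫ z, L z ∂μ = ∑ z, P z * L z := integral_weightMeasure hP hP1 L
  have hsubG : HasSubgaussianMGF (fun z => L z - ∫ z, L z ∂μ) ((‖C - -C‖₊ / 2) ^ 2) μ :=
    hasSubgaussianMGF_of_mem_Icc Measurable.of_discrete.aemeasurable
      (ae_of_all _ fun z => abs_le.1 (hL z))
  have hindep := iIndepFun_pi (μ := fun _ : ι => μ)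
    (X := fun _ z => L z - ∫ z, L z ∂μ) fun _ => Measurable.of_discrete.aemeasurable
  have hcoord (i : ι) : HasSubgaussianMGF (fun ω : ι → Z => L (ω i) - ∫ z, L z ∂μ)
      ((‖C - -C‖₊ / 2) ^ 2) (Measure.pi fun _ => μ) := by
    have hi := measurePreserving_eval (fun _ : ι => μ) i
    exact .of_map hi.measurable.aemeasurable (by rwa [hi.map_eq])
  have hHoeffding := HasSubgaussianMGF.measure_sum_ge_le_of_iIndepFun hindep (s := univ)
    (fun i _ => hcoord i) (ε := Fintype.card ι * s) (by positivity)
  have hset : {ω : ι → Z | Fintype.card ι * s ≤ ∑ i, (L (ω i) - ∫ z, L z ∂μ)} =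
      ↑(univ.filter (fun f : ι → Z => Fintype.card ι * (∑ z, P z * L z + s) ≤ ∑ i, L (f i))) := by
    ext ω
    simp only [Set.mem_ofPred_eq, sum_sub_distrib, hLμ, coe_filter, mem_univ, true_and,
      sum_const, card_univ, nsmul_eq_mul]
    constructor <;> intro h <;> linarith
  have hvar : ((∑ _ : ι, (‖C - -C‖₊ / 2) ^ 2 : NNReal) : ℝ) = Fintype.card ι * C ^ 2 := by
    simp [sub_neg_eq_add, ← two_mul]
  rw [hset, pi_weightMeasure_real_finset hP hP1, hvar] at hHoeffding
  refine hHoeffding.trans_eq ?_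
  congr 1
  field_simp

lemma sum_sub_sum_le_exp_mul_sum {α : Type*} {p q : α → ℝ} (hp : ∀ a, 0 ≤ p a)
    (hq : ∀ a, 0 ≤ q a) {t : ℝ} {A B : Finset α} (hAB : ∀ a ∈ A, a ∉ B → p a ≤ Real.exp t * q a) :
    ∑ a ∈ A, p a - ∑ a ∈ B, p a ≤ Real.exp t * ∑ a ∈ A, q a := by
  rw [← sum_filter_add_sum_filter_not A (· ∈ B), mul_sum]
  have hin : ∑ a ∈ A.filter (· ∈ B), p a ≤ ∑ a ∈ B, p a :=
    sum_le_sum_of_subset_of_nonneg (fun a ha => (mem_filter.1 ha).2) fun a _ _ => hp a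
  have hout : ∑ a ∈ A.filter (· ∉ B), p a ≤ ∑ a ∈ A, Real.exp t * q a :=
    (sum_le_sum fun a ha => hAB a (mem_filter.1 ha).1 (mem_filter.1 ha).2).trans
      (sum_le_sum_of_subset_of_nonneg (filter_subset _ _) fun a _ _ => by positivity [hq a])
  linarith

lemma prod_eq_prod_mul_exp_sum_log_div {ι Z : Type*} [Fintype ι] {P Q : Z → ℝ}
    (hP : ∀ z, 0 < P z) (hQ : ∀ z, 0 < Q z) (f : ι → Z) :
    ∏ i, P (f i) = (∏ i, Q (f i)) * Real.exp (∑ i, Real.log (P (f i) / Q (f i))) := by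
  rw [Real.exp_sum, ← prod_mul_distrib]
  refine prod_congr rfl fun i _ => ?_
  rw [Real.exp_log (div_pos (hP _) (hQ _)), mul_div_cancel₀ _ (hQ _).ne']

lemma lt_mul_sq_div_of_mul_sqrt_lt {a C s x : ℝ} (hC : 0 < C) (hx : 0 < x)
    (h : C * √(2 * a / x) < s) : a < x * s ^ 2 / (2 * C ^ 2) := by
  have hs : 0 < s := (by positivity : 0 ≤ C * √(2 * a / x)).trans_lt h
  have h1 : 2 * a / x < (s / C) ^ 2 :=
    (Real.sqrt_lt' (by positivity)).1 ((lt_div_iff₀' hC).2 h)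
  rw [div_lt_iff₀ hx, div_pow, div_mul_eq_mul_div, lt_div_iff₀ (by positivity)] at h1
  rw [lt_div_iff₀ (by positivity)]
  linarith

lemma one_sub_sub_exp_le_exp_mul_sum_prod {ι Z : Type*} [Fintype ι] [DecidableEq ι] [Fintype Z]
    {P Q : Z → ℝ} (hP : ∀ z, 0 < P z) (hP1 : ∑ z, P z = 1) (hQ : ∀ z, 0 < Q z) {C : ℝ}
    (hC : ∀ z, |Real.log (P z / Q z)| ≤ C) {ε s : ℝ} (hs : 0 ≤ s) (A : Finset (ι → Z))
    (hA : ∑ f ∈ Aᶜ, ∏ i, P (f i) ≤ ε) :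
    1 - ε - Real.exp (-(Fintype.card ι : ℝ) * s ^ 2 / (2 * C ^ 2)) ≤
      Real.exp (Fintype.card ι * (∑ z, P z * Real.log (P z / Q z) + s)) *
        ∑ f ∈ A, ∏ i, Q (f i) := by
  have hHoeffding := sum_prod_le_exp_of_le_sum (ι := ι) (fun z => (hP z).le) hP1 hC hs
  have hmassA : 1 - ε ≤ ∑ f ∈ A, ∏ i, P (f i) := by
    have htotal : ∑ f : ι → Z, ∏ i, P (f i) = 1 := by
      rw [← Fintype.prod_sum fun _ : ι => P, hP1, prod_const_one]
    linarith [sum_compl_add_sum A fun f => ∏ i, P (f i)]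
  set t := Fintype.card ι * (∑ z, P z * Real.log (P z / Q z) + s)
  have hchange := sum_sub_sum_le_exp_mul_sum (t := t) (A := A)
    (B := univ.filter fun f : ι → Z => t ≤ ∑ i, Real.log (P (f i) / Q (f i)))
    (fun f => prod_nonneg fun i _ => (hP (f i)).le) (fun f => prod_nonneg fun i _ => (hQ (f i)).le)
    fun f _ hf => by
      rw [prod_eq_prod_mul_exp_sum_log_div hP hQ f, mul_comm]
      refine mul_le_mul_of_nonneg_right (Real.exp_le_exp.2 ?_)
        (prod_nonneg fun i _ => (hQ (f i)).le)
      simpa using (not_le.1 (by simpa using hf)).le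
  linarith

theorem stmt_11_general {Z : Type*} [Fintype Z] [Nonempty Z]
    (P Q : Z → ℝ) (hPpos : ∀ z, 0 < P z) (hP1 : ∑ z, P z = 1)
    (hQpos : ∀ z, 0 < Q z)
    (C : ℝ)
    (hC : C = Finset.univ.sup' Finset.univ_nonempty (fun z => |Real.log (P z / Q z)|))
    (hCpos : 0 < C)
    (n : ℕ) (hn : 1 ≤ n) (ε : ℝ) (hε : ε ∈ Set.Ioo (0 : ℝ) 1)
    (s : ℝ) (hs : C * Real.sqrt (2 * Real.log (1 / (1 - ε)) / n) < s)
    (β : ℝ)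
    (hβ : β = sInf {q : ℝ | ∃ A : Finset (Fin n → Z),
        (∑ z ∈ Aᶜ, ∏ i, P (z i)) ≤ ε ∧ q = ∑ z ∈ A, ∏ i, Q (z i)}) :
    -(1 / (n : ℝ)) * Real.log β ≤
      (∑ z, P z * Real.log (P z / Q z)) + s +
        (1 / (n : ℝ)) * Real.log (1 / (1 - ε - Real.exp (-(n : ℝ) * s ^ 2 / (2 * C ^ 2)))) := by
  obtain ⟨hε0, hε1⟩ := hε
  have hn0 : (0 : ℝ) < n := by exact_mod_cast hn
  have hLC (z : Z) : |Real.log (P z / Q z)| ≤ C :=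
    hC ▸ le_sup' (fun z => |Real.log (P z / Q z)|) (mem_univ z)
  have hs0 : 0 ≤ s := (by positivity : 0 ≤ C * √(2 * Real.log (1 / (1 - ε)) / n)).trans hs.le
  set E := Real.exp (-(n : ℝ) * s ^ 2 / (2 * C ^ 2))
  set K := ∑ z, P z * Real.log (P z / Q z) + s
  have hE : E < 1 - ε := calc
    E < Real.exp (-Real.log (1 / (1 - ε))) := by
      have := lt_mul_sq_div_of_mul_sqrt_lt hCpos hn0 hs
      exact Real.exp_lt_exp.2 (by rw [neg_mul, neg_div]; linarith)
    _ = 1 - ε := by rw [one_div, Real.log_inv, neg_neg, Real.exp_log (by linarith)]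
  have hβ_ge : (1 - ε - E) * Real.exp (-(n * K)) ≤ β := by
    rw [hβ]
    refine le_csInf ⟨_, univ, by simp [hε0.le], rfl⟩ ?_
    rintro q ⟨A, hA, rfl⟩
    have := one_sub_sub_exp_le_exp_mul_sum_prod hPpos hP1 hQpos hLC hs0 A hA
    rw [Fintype.card_fin] at this
    rwa [Real.exp_neg, ← div_eq_mul_inv, div_le_iff₀' (Real.exp_pos _)]
  have hlog := Real.log_le_log (mul_pos (by linarith) (Real.exp_pos _)) hβ_ge
  rw [Real.log_mul (by linarith) (Real.exp_pos _).ne', Real.log_exp] at hlog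
  have hK : 1 / (n : ℝ) * (n * K) = K := by field_simp
  rw [one_div (1 - ε - E), Real.log_inv]
  linarith [mul_le_mul_of_nonneg_left hlog (by positivity : (0 : ℝ) ≤ 1 / n)]

theorem stmt_11 {Z : Type*} [Fintype Z] [Nonempty Z]
    (P Q : Z → ℝ) (hPpos : ∀ z, 0 < P z) (hP1 : ∑ z, P z = 1)
    (hQpos : ∀ z, 0 < Q z) (hQ1 : ∑ z, Q z = 1)
    (C : ℝ)
    (hC : C = Finset.univ.sup' Finset.univ_nonempty (fun z => |Real.log (P z / Q z)|))
    (hCpos : 0 < C)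
    (n : ℕ) (hn : 1 ≤ n) (ε : ℝ) (hε : ε ∈ Set.Ioo (0 : ℝ) 1)
    (s : ℝ) (hs : C * Real.sqrt (2 * Real.log (1 / (1 - ε)) / n) < s)
    (β : ℝ)
    (hβ : β = sInf {q : ℝ | ∃ A : Finset (Fin n → Z),
        (∑ z ∈ Aᶜ, ∏ i, P (z i)) ≤ ε ∧ q = ∑ z ∈ A, ∏ i, Q (z i)}) :
    -(1 / (n : ℝ)) * Real.log β ≤
      (∑ z, P z * Real.log (P z / Q z)) + s +
        (1 / (n : ℝ)) * Real.log (1 / (1 - ε - Real.exp (-(n : ℝ) * s ^ 2 / (2 * C ^ 2)))) :=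
  stmt_11_general P Q hPpos hP1 hQpos C hC hCpos n hn ε hε s hs β hβ
end
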